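/- arXiv:1307.4410 — 2 statements merged into one kernel-verified Lean document; each statement's English description precedes it below -/
import Mathlib

section
/- Let A ∈ M_n(K) have split characteristic polynomial χ_A = ∏(X−λᵢ)^{αᵢ} with distinct λᵢ, and let P = ∏(X−λᵢ) (the radical, equal to χ_A / gcd(χ_A, χ_A′)). Then P′(A) is invertible and its inverse is a polynomial in A. -/
/-!
Since `P` is separable, `P'` is coprime to each factor `X - λᵢ` of `P`, hence to `χ_A`.
Evaluating a Bézout relation `u χ_A + v P' = 1` at `A` and using Cayley–Hamilton gives
`v(A) P'(A) = 1`.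
-/

open Polynomial Finset

theorem Polynomial.Separable.isCoprime_prod_pow_derivative {R ι : Type*} [CommRing R]
    {P : R[X]} (hP : P.Separable) (s : Finset ι) (f : ι → R[X]) (hf : ∀ i ∈ s, f i ∣ P)
    (α : ι → ℕ) : IsCoprime (∏ i ∈ s, f i ^ α i) (derivative P) :=
  IsCoprime.prod_left fun i hi ↦ (IsCoprime.of_isCoprime_of_dvd_left hP (hf i hi)).pow_left

theorem Polynomial.exists_aeval_mul_eq_one_of_isCoprime {R A : Type*} [CommRing R] [Ring A]
    [Algebra R A] {a : A} {p q : R[X]} (hpq : IsCoprime p q) (hp : aeval a p = 0) :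
    ∃ v : R[X], aeval a v * aeval a q = 1 := by
  obtain ⟨u, v, huv⟩ := hpq
  refine ⟨v, ?_⟩
  simpa only [map_add, map_mul, map_one, hp, mul_zero, zero_add] using congrArg (aeval a) huv

theorem Matrix.isUnit_aeval_and_inv_mem_adjoin_of_isCoprime {m R : Type*} [Fintype m]
    [DecidableEq m] [CommRing R] {M : Matrix m m R} {p q : R[X]} (hpq : IsCoprime p q)
    (hp : aeval M p = 0) :
    IsUnit (aeval M q) ∧ (aeval M q)⁻¹ ∈ Algebra.adjoin R {M} := by
  obtain ⟨v, hv⟩ := exists_aeval_mul_eq_one_of_isCoprime hpq hp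
  refine ⟨.of_mul_eq_one_right _ hv, ?_⟩
  rw [Matrix.inv_eq_left_inv hv, Algebra.adjoin_singleton_eq_range_aeval]
  exact ⟨v, rfl⟩

theorem derivative_radical_eval_invertible_general
    (K : Type*) [Field K] (n : ℕ)
    (A : Matrix (Fin n) (Fin n) K)
    (r : ℕ) (lam : Fin r → K) (hlam : Function.Injective lam)
    (α : Fin r → ℕ)
    (hchar : A.charpoly = ∏ i, (Polynomial.X - Polynomial.C (lam i)) ^ α i) :
    IsUnit (Polynomial.aeval A
        (Polynomial.derivative (∏ i, (Polynomial.X - Polynomial.C (lam i))))) ∧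
    (Polynomial.aeval A
        (Polynomial.derivative (∏ i, (Polynomial.X - Polynomial.C (lam i)))))⁻¹ ∈
      Algebra.adjoin K {A} := by
  have hcop : IsCoprime A.charpoly (derivative (∏ i, (X - C (lam i)))) := hchar ▸
    (separable_prod_X_sub_C_iff.mpr hlam).isCoprime_prod_pow_derivative univ _
      (fun i _ ↦ dvd_prod_of_mem _ (mem_univ i)) α
  exact Matrix.isUnit_aeval_and_inv_mem_adjoin_of_isCoprime hcop A.aeval_self_charpoly

theorem derivative_radical_eval_invertible
    (K : Type*) [Field K] [CharZero K] (n : ℕ)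
    (A : Matrix (Fin n) (Fin n) K)
    (r : ℕ) (lam : Fin r → K) (hlam : Function.Injective lam)
    (α : Fin r → ℕ) (hα : ∀ i, 1 ≤ α i)
    (hchar : A.charpoly = ∏ i, (Polynomial.X - Polynomial.C (lam i)) ^ α i) :
    IsUnit (Polynomial.aeval A
        (Polynomial.derivative (∏ i, (Polynomial.X - Polynomial.C (lam i))))) ∧
    (Polynomial.aeval A
        (Polynomial.derivative (∏ i, (Polynomial.X - Polynomial.C (lam i)))))⁻¹ ∈
      Algebra.adjoin K {A} :=
  derivative_radical_eval_invertible_general K n A r lam hlam α hchar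
end

section
/- Let A ∈ M_n(ℂ) and P the squarefree part of χ_A. Define the Newton iteration A₀ = A, A_{m+1} = A_m − P(A_m)·P′(A_m)⁻¹. Then the sequence is well-defined (each P′(A_m) is invertible), each A_m is a polynomial in A, P(A_m) ∈ P(A)^{2^m}·ℂ[A], and the sequence is stationary from some rank onward at the diagonalizable part D of the Dunford decomposition A = D + N. -/
/-!
The squarefree part `P` of `χ_A` has the same roots as `χ_A`, so `χ_A ∣ P ^ n` and `P(A)` is
nilpotent; since `P` is separable, a Bézout relation `u P + v P' = 1` then makes `P'(x)` a unit
whenever `P(x)` is nilpotent. Inside the commutative algebra `ℂ[A]` the Newton iteration stays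
within a nilpotent distance of `A` and converges quadratically, `P(A) ^ 2 ^ m ∣ P(A_m)`, so it
reaches a root `D` of `P` after finitely many steps and is stationary from then on. As a root of
a squarefree polynomial `D` is diagonalizable, and `A - D` is nilpotent and commutes with `D`.
-/

open Polynomial Function Module

theorem map_ringInverse_of_isUnit {M N F : Type*} [MonoidWithZero M] [MonoidWithZero N]
    [FunLike F M N] [MonoidHomClass F M N] (f : F) {u : M} (hu : IsUnit u) :
    f (Ring.inverse u) = Ring.inverse (f u) := by
  obtain ⟨u, rfl⟩ := hu
  rw [Ring.inverse_unit]
  exact (Ring.inverse_unit (Units.map (f : M →* N) u)).symm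

namespace Polynomial

section SquarefreePart

variable {K : Type*} [Field K] [DecidableEq K] {p : K[X]}

theorem div_gcd_derivative_ne_zero (hp : p ≠ 0) : p / gcd p (derivative p) ≠ 0 :=
  right_ne_zero_of_mul (a := gcd p (derivative p)) <| by
    rwa [EuclideanDomain.mul_div_cancel' (gcd_ne_zero_of_left hp) (gcd_dvd_left _ _)]

variable [CharZero K]

theorem rootMultiplicity_gcd_derivative (hp : p ≠ 0) (t : K) :
    (gcd p (derivative p)).rootMultiplicity t = p.rootMultiplicity t - 1 := by
  refine le_antisymm ?_ ?_
  · by_cases ht : p.IsRoot t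
    · have hp' : derivative p ≠ 0 :=
        derivative_ne_zero.mpr (natDegree_pos_of_eval₂_root hp (RingHom.id K) ht fun _ ↦ id).ne'
      rw [← derivative_rootMultiplicity_of_root ht]
      exact rootMultiplicity_le_rootMultiplicity_of_dvd hp' (gcd_dvd_right _ _) t
    · have := rootMultiplicity_le_rootMultiplicity_of_dvd hp (gcd_dvd_left _ (derivative p)) t
      rw [rootMultiplicity_eq_zero ht] at this ⊢
      omega
  · rw [le_rootMultiplicity_iff (gcd_ne_zero_of_left hp)]
    exact dvd_gcd ((pow_dvd_pow _ (Nat.sub_le _ _)).trans (pow_rootMultiplicity_dvd p t))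
      ((pow_dvd_pow _ (rootMultiplicity_sub_one_le_derivative_rootMultiplicity p t)).trans
        (pow_rootMultiplicity_dvd _ t))

theorem rootMultiplicity_div_gcd_derivative (hp : p ≠ 0) (t : K) :
    (p / gcd p (derivative p)).rootMultiplicity t = if p.IsRoot t then 1 else 0 := by
  have hg : gcd p (derivative p) * (p / gcd p (derivative p)) = p :=
    EuclideanDomain.mul_div_cancel' (gcd_ne_zero_of_left hp) (gcd_dvd_left _ _)
  have hsum := rootMultiplicity_mul (x := t) (hg ▸ hp)
  rw [hg, rootMultiplicity_gcd_derivative hp] at hsum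
  split_ifs with ht
  · have := (rootMultiplicity_pos hp).mpr ht
    omega
  · rw [rootMultiplicity_eq_zero ht] at hsum
    omega

variable [IsAlgClosed K]

theorem separable_div_gcd_derivative (hp : p ≠ 0) : (p / gcd p (derivative p)).Separable := by
  refine (nodup_roots_iff_of_splits (div_gcd_derivative_ne_zero hp) (IsAlgClosed.splits _)).mp ?_
  refine Multiset.nodup_iff_count_le_one.mpr fun t ↦ ?_
  rw [count_roots, rootMultiplicity_div_gcd_derivative hp]
  split_ifs <;> omega

theorem dvd_div_gcd_derivative_pow (hp : p ≠ 0) :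
    p ∣ (p / gcd p (derivative p)) ^ p.natDegree := by
  rw [IsAlgClosed.dvd_iff_roots_le_roots hp (pow_ne_zero _ (div_gcd_derivative_ne_zero hp)),
    roots_pow, Multiset.le_iff_count]
  intro t
  rw [Multiset.count_nsmul, count_roots, count_roots, rootMultiplicity_div_gcd_derivative hp]
  split_ifs with ht
  · rw [mul_one, ← count_roots]
    exact (Multiset.count_le_card _ _).trans (card_roots' p)
  · rw [rootMultiplicity_eq_zero ht, mul_zero]

end SquarefreePart

section Newton

variable {R S : Type*} [CommRing R] [CommRing S] [Algebra R S] {P : R[X]} {x : S}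

theorem isNilpotent_aeval_of_dvd_pow {q : R[X]} {d : ℕ} (hq : aeval x q = 0) (hd : q ∣ P ^ d) :
    IsNilpotent (aeval x P) := by
  obtain ⟨c, hc⟩ := hd
  exact ⟨d, by rw [← map_pow, hc, map_mul, hq, zero_mul]⟩

theorem isUnit_aeval_derivative_of_separable (hP : P.Separable) (h : IsNilpotent (aeval x P)) :
    IsUnit (aeval x (derivative P)) := by
  obtain ⟨u, v, huv⟩ := hP
  have hbezout : aeval x v * aeval x (derivative P) = 1 - aeval x u * aeval x P := by
    rw [eq_sub_iff_add_eq', ← map_mul, ← map_mul, ← map_add, huv, map_one]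
  exact isUnit_of_mul_isUnit_right <|
    hbezout ▸ ((Commute.all _ _).isNilpotent_mul_left h).isUnit_one_sub

theorem isUnit_aeval_derivative_iterate_newtonMap (h : IsNilpotent (aeval x P))
    (h' : IsUnit (aeval x (derivative P))) (m : ℕ) :
    IsUnit (aeval (P.newtonMap^[m] x) (derivative P)) :=
  isUnit_aeval_of_isUnit_aeval_of_isNilpotent_sub h'
    (isNilpotent_iterate_newtonMap_sub_of_isNilpotent h m)

theorem aeval_iterate_newtonMap_eq_zero {k : ℕ} (hk : aeval x P ^ k = 0)
    (h' : IsUnit (aeval x (derivative P))) : aeval (P.newtonMap^[k] x) P = 0 := by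
  rw [← zero_dvd_iff, ← pow_eq_zero_of_le k.lt_two_pow_self.le hk]
  exact aeval_pow_two_pow_dvd_aeval_iterate_newtonMap ⟨k, hk⟩ h' k

theorem iterate_newtonMap_eq_of_le {k m : ℕ} (hk : aeval (P.newtonMap^[k] x) P = 0)
    (hkm : k ≤ m) : P.newtonMap^[m] x = P.newtonMap^[k] x := by
  obtain ⟨j, rfl⟩ := Nat.exists_eq_add_of_le hkm
  rw [add_comm, iterate_add_apply, (isFixedPt_newtonMap_of_aeval_eq_zero hk).iterate j]

theorem algHom_iterate_newtonMap_eq {T : Type*} [Ring T] [Algebra R T] (f : S →ₐ[R] T)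
    (h : IsNilpotent (aeval x P)) (h' : IsUnit (aeval x (derivative P))) {y : ℕ → T}
    (h0 : y 0 = f x)
    (hstep : ∀ m, y (m + 1) = y m - aeval (y m) P * Ring.inverse (aeval (y m) (derivative P)))
    (m : ℕ) :
    f (P.newtonMap^[m] x) = y m := by
  induction m with
  | zero => exact h0.symm
  | succ m ih =>
    rw [hstep, ← ih, aeval_algHom_apply, aeval_algHom_apply,
      ← map_ringInverse_of_isUnit f (isUnit_aeval_derivative_iterate_newtonMap h h' m),
      ← map_mul, ← map_sub, iterate_succ_apply', newtonMap_apply, mul_comm]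

end Newton

end Polynomial

theorem Module.End.IsSemisimple.exists_basis_eigenvectors {K V ι : Type*} [Field K]
    [IsAlgClosed K] [AddCommGroup V] [Module K V] [FiniteDimensional K V] {f : End K V}
    (hf : f.IsSemisimple) (b₀ : Basis ι K V) :
    ∃ (b : Basis ι K V) (μ : ι → K), ∀ i, f (b i) = μ i • b i := by
  classical
  have hdecomp := DirectSum.isInternal_submodule_of_iSupIndep_of_iSup_eq_top
    f.eigenspaces_iSupIndep hf.iSup_eigenspace_eq_top
  let v := hdecomp.collectedBasis fun μ ↦ finBasis K (f.eigenspace μ)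
  let e := v.indexEquiv b₀
  refine ⟨v.reindex e, fun i ↦ (e.symm i).1, fun i ↦ ?_⟩
  rw [Basis.reindex_apply]
  exact End.mem_eigenspace_iff.mp (hdecomp.collectedBasis_mem _ _)

namespace Matrix

variable {K n : Type*} [Field K] [Fintype n] [DecidableEq n] {D : Matrix n n K}

theorem exists_isDiag_conj_of_basis_eigenvectors (b : Basis n K (n → K)) (μ : n → K)
    (hb : ∀ i, D *ᵥ b i = μ i • b i) :
    ∃ Q : Matrix n n K, IsUnit Q.det ∧ (Q * D * Q⁻¹).IsDiag := by
  let e := Pi.basisFun K n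
  have hdiag : LinearMap.toMatrix b b (toLin' D) = diagonal μ := by
    ext i j
    rw [LinearMap.toMatrix_apply, toLin'_apply, hb j, map_smul, b.repr_self]
    rcases eq_or_ne j i with rfl | hji
    · simp
    · simp [hji.symm]
  have hconj : b.toMatrix e * D * e.toMatrix b = diagonal μ := by
    rw [← hdiag, ← basis_toMatrix_mul_linearMap_toMatrix_mul_basis_toMatrix b e b e,
      LinearMap.toMatrix_eq_toMatrix', LinearMap.toMatrix'_toLin']
  refine ⟨b.toMatrix e, isUnit_det_of_right_inverse (b.toMatrix_mul_toMatrix_flip e), ?_⟩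
  rw [inv_eq_right_inv (b.toMatrix_mul_toMatrix_flip e), hconj]
  exact isDiag_diagonal μ

theorem exists_isDiag_conj_of_squarefree_aeval_eq_zero [IsAlgClosed K] {P : K[X]}
    (hP : Squarefree P) (hD : aeval D P = 0) :
    ∃ Q : Matrix n n K, IsUnit Q.det ∧ (Q * D * Q⁻¹).IsDiag := by
  have hss : End.IsSemisimple (toLin' D) := by
    refine End.isSemisimple_of_squarefree_aeval_eq_zero hP ?_
    change aeval (toLinAlgEquiv' D) P = 0
    rw [aeval_algHom_apply, hD, map_zero]
  obtain ⟨b, μ, hb⟩ := hss.exists_basis_eigenvectors (Pi.basisFun K n)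
  exact exists_isDiag_conj_of_basis_eigenvectors b μ fun i ↦ by rw [← toLin'_apply, hb]

end Matrix

theorem newton_raphson_dunford
    (n : ℕ) (A : Matrix (Fin n) (Fin n) ℂ)
    (P : Polynomial ℂ)
    (hP : P = A.charpoly / gcd A.charpoly (Polynomial.derivative A.charpoly))
    (Aseq : ℕ → Matrix (Fin n) (Fin n) ℂ)
    (h0 : Aseq 0 = A)
    (hstep : ∀ m, Aseq (m + 1) = Aseq m -
      Polynomial.aeval (Aseq m) P * (Polynomial.aeval (Aseq m) (Polynomial.derivative P))⁻¹) :
    (∀ m, IsUnit (Polynomial.aeval (Aseq m) (Polynomial.derivative P))) ∧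
    (∀ m, Aseq m ∈ Algebra.adjoin ℂ {A}) ∧
    (∀ m, ∃ B ∈ Algebra.adjoin ℂ {A},
      Polynomial.aeval (Aseq m) P = (Polynomial.aeval A P) ^ (2 ^ m) * B) ∧
    ∃ (m₀ : ℕ) (D N : Matrix (Fin n) (Fin n) ℂ),
      (∀ m, m₀ ≤ m → Aseq m = D) ∧
      A = D + N ∧
      (∃ Q : Matrix (Fin n) (Fin n) ℂ, IsUnit Q.det ∧ (Q * D * Q⁻¹).IsDiag) ∧
      IsNilpotent N ∧ Commute D N := by
  have hχ0 : A.charpoly ≠ 0 := A.charpoly_monic.ne_zero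
  have hsep : P.Separable := hP ▸ separable_div_gcd_derivative hχ0
  let S := Algebra.adjoin ℂ {A}
  let a : S := ⟨A, Algebra.self_mem_adjoin_singleton ℂ A⟩
  have hχ : aeval a A.charpoly = 0 := Subtype.val_injective <|
    (aeval_algHom_apply S.val a _).symm.trans A.aeval_self_charpoly
  have hnil : IsNilpotent (aeval a P) :=
    isNilpotent_aeval_of_dvd_pow hχ (hP ▸ dvd_div_gcd_derivative_pow hχ0)
  have hunit := isUnit_aeval_derivative_of_separable hsep hnil
  have hseq : ∀ m, S.val (P.newtonMap^[m] a) = Aseq m :=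
    algHom_iterate_newtonMap_eq S.val hnil hunit h0 fun m ↦ by
      rw [hstep, Matrix.nonsing_inv_eq_ringInverse]
  obtain ⟨k, hk⟩ := id hnil
  set r := P.newtonMap^[k] a
  have hr : aeval r P = 0 := aeval_iterate_newtonMap_eq_zero hk hunit
  refine ⟨fun m ↦ ?_, fun m ↦ ?_, fun m ↦ ?_, k, S.val r, A - S.val r, fun m hm ↦ ?_,
    (add_sub_cancel _ _).symm, ?_, ?_, (Commute.all r (a - r)).map S.val⟩
  · rw [← hseq, aeval_algHom_apply]
    exact (isUnit_aeval_derivative_iterate_newtonMap hnil hunit m).map S.val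
  · rw [← hseq]
    exact SetLike.coe_mem _
  · obtain ⟨B, hB⟩ := aeval_pow_two_pow_dvd_aeval_iterate_newtonMap hnil hunit m
    refine ⟨B, B.2, ?_⟩
    rw [← hseq, aeval_algHom_apply, hB, map_mul, map_pow, ← aeval_algHom_apply]
    rfl
  · rw [← hseq, iterate_newtonMap_eq_of_le hr hm]
  · refine Matrix.exists_isDiag_conj_of_squarefree_aeval_eq_zero hsep.squarefree ?_
    rw [aeval_algHom_apply, hr, map_zero]
  · have := (isNilpotent_iterate_newtonMap_sub_of_isNilpotent hnil k).neg.map S.val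
    rwa [neg_sub, map_sub] at this
end
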